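/- Let f : ℝ^d → ℝ be differentiable, let β, γ : (0, ∞) → ℝ be continuously differentiable, and define the Euclidean Bregman Lagrangian L(x, v, t) = e^{γ_t} ( (1/2)‖v‖² − e^{β_t} f(x) ). A twice continuously differentiable curve X : (0, ∞) → ℝ^d satisfies the Euler-Lagrange equation d/dt [ ∂L/∂v (X_t, Ẋ_t, t) ] = ∂L/∂x (X_t, Ẋ_t, t) if and only if it satisfies Ẍ_t + γ̇_t Ẋ_t + e^{β_t} ∇f(X_t) = 0. -/

import Mathlib

open scoped RealInnerProductSpace
open Real Set

noncomputable section

/-- The Euclidean Bregman Lagrangian `L(x, v, t) = e^{γ_t} ((1/2)‖v‖² − e^{β_t} f(x))`. -/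
def eucBregmanLagrangian (d : ℕ) (β γ : ℝ → ℝ) (f : EuclideanSpace ℝ (Fin d) → ℝ)
    (x v : EuclideanSpace ℝ (Fin d)) (t : ℝ) : ℝ :=
  Real.exp (γ t) * ((1 / 2) * ‖v‖ ^ 2 - Real.exp (β t) * f x)

/-! Both partial gradients of `L` are explicit: `∂L/∂v = e^{γ_t} v` and
`∂L/∂x = -e^{γ_t} e^{β_t} ∇f(x)`. Hence the Euler–Lagrange equation says that
`e^{γ_t} (Ẍ_t + γ̇_t Ẋ_t)`, the derivative of the momentum `e^{γ_t} Ẋ_t`, equals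
`-e^{γ_t} e^{β_t} ∇f(X_t)`, and dividing by `e^{γ_t} ≠ 0` gives the second-order equation. -/

section Gradient

variable {F : Type*} [NormedAddCommGroup F] [InnerProductSpace ℝ F] [CompleteSpace F]
  {f g : F → ℝ} {f' g' x : F}

theorem HasGradientAt.const_mul (c : ℝ) (hf : HasGradientAt f f' x) :
    HasGradientAt (fun y => c * f y) (c • f') x := by
  rw [hasGradientAt_iff_hasFDerivAt, map_smul]
  exact hf.hasFDerivAt.const_mul c

theorem HasGradientAt.sub (hf : HasGradientAt f f' x) (hg : HasGradientAt g g' x) :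
    HasGradientAt (fun y => f y - g y) (f' - g') x := by
  rw [hasGradientAt_iff_hasFDerivAt, map_sub]
  exact hf.hasFDerivAt.sub hg.hasFDerivAt

theorem hasGradientAt_half_norm_sq (x : F) :
    HasGradientAt (fun y => (1 / 2) * ‖y‖ ^ 2) x x := by
  rw [hasGradientAt_iff_hasFDerivAt]
  refine ((hasStrictFDerivAt_norm_sq x).hasFDerivAt.const_mul (1 / 2)).congr_fderiv ?_
  ext y
  simp [InnerProductSpace.toDual_apply_apply]

end Gradient

section Lagrangian

variable {d : ℕ} {β γ : ℝ → ℝ} {f : EuclideanSpace ℝ (Fin d) → ℝ}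

theorem gradient_eucBregmanLagrangian_velocity (x v : EuclideanSpace ℝ (Fin d)) (t : ℝ) :
    gradient (fun v => eucBregmanLagrangian d β γ f x v t) v = exp (γ t) • v := by
  simpa only [eucBregmanLagrangian, sub_zero] using (((hasGradientAt_half_norm_sq v).sub
    (hasGradientAt_const v (exp (β t) * f x))).const_mul (exp (γ t))).gradient

theorem gradient_eucBregmanLagrangian_position {x : EuclideanSpace ℝ (Fin d)}
    (hf : DifferentiableAt ℝ f x) (v : EuclideanSpace ℝ (Fin d)) (t : ℝ) :
    gradient (fun x => eucBregmanLagrangian d β γ f x v t) x =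
      -(exp (γ t) * exp (β t)) • gradient f x := by
  simpa only [eucBregmanLagrangian, zero_sub, smul_neg, smul_smul, neg_smul] using
    (((hasGradientAt_const x ((1 / 2) * ‖v‖ ^ 2)).sub
      (hf.hasGradientAt.const_mul (exp (β t)))).const_mul (exp (γ t))).gradient

end Lagrangian

theorem hasDerivAt_exp_smul_iff {E : Type*} [NormedAddCommGroup E] [NormedSpace ℝ E]
    {γ : ℝ → ℝ} {V : ℝ → E} {γ' t : ℝ} {V' w : E} (hγ : HasDerivAt γ γ' t)
    (hV : HasDerivAt V V' t) :
    HasDerivAt (fun s => exp (γ s) • V s) w t ↔ w = exp (γ t) • (V' + γ' • V t) := by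
  have hD : HasDerivAt (fun s => exp (γ s) • V s) (exp (γ t) • (V' + γ' • V t)) t :=
    (hγ.exp.smul hV).congr_deriv (by module)
  exact ⟨fun h => h.unique hD, fun h => h ▸ hD⟩

theorem euclidean_bregman_euler_lagrange_iff_general
    (d : ℕ) (f : EuclideanSpace ℝ (Fin d) → ℝ) (hf : Differentiable ℝ f)
    (β γ γ' : ℝ → ℝ)
    (hγ : ∀ t ∈ Set.Ioi (0 : ℝ), HasDerivAt γ (γ' t) t)
    (X X' X'' : ℝ → EuclideanSpace ℝ (Fin d))
    (hX' : ∀ t ∈ Set.Ioi (0 : ℝ), HasDerivAt X' (X'' t) t) :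
    (∀ t ∈ Set.Ioi (0 : ℝ),
      HasDerivAt
        (fun s : ℝ => gradient (fun v => eucBregmanLagrangian d β γ f (X s) v s) (X' s))
        (gradient (fun x => eucBregmanLagrangian d β γ f x (X' t) t) (X t)) t) ↔
    (∀ t ∈ Set.Ioi (0 : ℝ),
      X'' t + γ' t • X' t + Real.exp (β t) • gradient f (X t) = 0) := by
  refine forall₂_congr fun t ht => ?_
  simp only [gradient_eucBregmanLagrangian_velocity,
    gradient_eucBregmanLagrangian_position (hf (X t)),
    hasDerivAt_exp_smul_iff (hγ t ht) (hX' t ht)]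
  have hsplit : exp (γ t) • (X'' t + γ' t • X' t + exp (β t) • gradient f (X t)) =
      exp (γ t) • (X'' t + γ' t • X' t) - -(exp (γ t) * exp (β t)) • gradient f (X t) := by
    module
  rw [eq_comm, ← sub_eq_zero, ← hsplit, smul_eq_zero_iff_right (exp_ne_zero (γ t))]

theorem euclidean_bregman_euler_lagrange_iff
    (d : ℕ) (f : EuclideanSpace ℝ (Fin d) → ℝ) (hf : Differentiable ℝ f)
    (β γ β' γ' : ℝ → ℝ)
    (hβ : ∀ t ∈ Set.Ioi (0 : ℝ), HasDerivAt β (β' t) t)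
    (hγ : ∀ t ∈ Set.Ioi (0 : ℝ), HasDerivAt γ (γ' t) t)
    (hβ'c : ContinuousOn β' (Set.Ioi 0)) (hγ'c : ContinuousOn γ' (Set.Ioi 0))
    (X X' X'' : ℝ → EuclideanSpace ℝ (Fin d))
    (hX : ∀ t ∈ Set.Ioi (0 : ℝ), HasDerivAt X (X' t) t)
    (hX' : ∀ t ∈ Set.Ioi (0 : ℝ), HasDerivAt X' (X'' t) t)
    (hX''c : ContinuousOn X'' (Set.Ioi 0)) :
    (∀ t ∈ Set.Ioi (0 : ℝ),
      HasDerivAt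
        (fun s : ℝ => gradient (fun v => eucBregmanLagrangian d β γ f (X s) v s) (X' s))
        (gradient (fun x => eucBregmanLagrangian d β γ f x (X' t) t) (X t)) t) ↔
    (∀ t ∈ Set.Ioi (0 : ℝ),
      X'' t + γ' t • X' t + Real.exp (β t) • gradient f (X t) = 0) :=
  euclidean_bregman_euler_lagrange_iff_general d f hf β γ γ' hγ X X' X'' hX'
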